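/- Let Δ be an α-saturated set of vD-formulas (with respect to the vD consequence relation ⊢), for some vD-formula α. Then for every vD-formula β: ~β ∈ Δ if and only if β ∉ Δ. -/
import Mathlib


/-- Formulas of the logic vD. -/
inductive VForm : Type
  | var : ℕ → VForm
  | conj : VForm → VForm → VForm
  | disj : VForm → VForm → VForm
  | imp : VForm → VForm → VForm
  | neg : VForm → VForm
  | circ : VForm → VForm

/-- The bottom formula ⊥ := β₀ ∧ (¬β₀ ∧ ∘β₀), for the fixed formula `b = β₀`. -/
def vBot (b : VForm) : VForm := .conj b (.conj (.neg b) (.circ b))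

/-- The defined classical negation ~α := α → ⊥. -/
def vNot (b : VForm) (a : VForm) : VForm := .imp a (vBot b)

/-- Axiom schemas (1)–(18) of the Hilbert system for vD. -/
inductive VAx (b : VForm) : VForm → Prop
  | a1 (α β : VForm) : VAx b (.imp α (.imp β α))
  | a2 (α β γ : VForm) :
      VAx b (.imp (.imp α (.imp β γ)) (.imp (.imp α β) (.imp α γ)))
  | a3 (α β : VForm) : VAx b (.imp α (.imp β (.conj α β)))
  | a4 (α β : VForm) : VAx b (.imp (.conj α β) α)
  | a5 (α β : VForm) : VAx b (.imp (.conj α β) β)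
  | a6 (α β : VForm) : VAx b (.imp α (.disj α β))
  | a7 (α β : VForm) : VAx b (.imp β (.disj α β))
  | a8 (α β : VForm) : VAx b (.disj (.imp α β) α)
  | a9 (α : VForm) : VAx b (.disj α (.neg α))
  | a10 (α γ : VForm) :
      VAx b (.imp (.imp α γ) (.imp (.imp (.neg α) γ) (.imp (.disj α (.neg α)) γ)))
  | a11 (α β γ : VForm) :
      VAx b (.imp (.imp (.imp α β) γ)
        (.imp (.imp α γ) (.imp (.disj (.imp α β) α) γ)))
  | a12 (α β : VForm) : VAx b (.imp (.circ α) (.imp α (.imp (.neg α) β)))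
  | a13 (α : VForm) : VAx b (.disj (.circ α) (.conj α (.neg α)))
  | a14 (α γ : VForm) :
      VAx b (.imp (.imp (.circ α) γ)
        (.imp (.imp (.conj α (.neg α)) γ)
          (.imp (.disj (.circ α) (.conj α (.neg α))) γ)))
  | a15 (α : VForm) :
      VAx b (.imp (vNot b (.neg α)) (vNot b (.neg (vNot b (.neg α)))))
  | a16 (α : VForm) :
      VAx b (.imp (vNot b (.neg (vNot b (.neg α)))) (vNot b (.neg α)))
  | a17 (α β : VForm) :
      VAx b (.imp (vNot b (.neg (.conj α β))) (.conj (vNot b (.neg α)) (vNot b (.neg β))))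
  | a18 (α β : VForm) :
      VAx b (.imp (.conj (vNot b (.neg α)) (vNot b (.neg β))) (vNot b (.neg (.conj α β))))

/-- Derivability in the Hilbert system for vD: axiom instances, hypotheses, modus
ponens, and the restricted rule (applied only to theorems, i.e. formulas derivable
from the empty set). -/
inductive VDer (b : VForm) : Set VForm → VForm → Prop
  | ax {Γ : Set VForm} {φ : VForm} : VAx b φ → VDer b Γ φ
  | hyp {Γ : Set VForm} {φ : VForm} : φ ∈ Γ → VDer b Γ φ
  | mp {Γ : Set VForm} {φ ψ : VForm} :
      VDer b Γ φ → VDer b Γ (.imp φ ψ) → VDer b Γ ψ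
  | negThm {Γ : Set VForm} {φ : VForm} :
      VDer b ∅ φ → VDer b Γ (.imp (.neg φ) (vNot b φ))

/-- Δ is α-saturated with respect to the vD consequence relation. -/
def VSaturated (b : VForm) (Δ : Set VForm) (α : VForm) : Prop :=
  ¬ VDer b Δ α ∧ ∀ β ∉ Δ, VDer b (Δ ∪ {β}) α

/-- Identity. -/
lemma vd_id (b : VForm) (Γ : Set VForm) (φ : VForm) : VDer b Γ (.imp φ φ) := by
  have h1 := VDer.ax (b := b) (Γ := Γ) (VAx.a1 φ (VForm.imp φ φ))
  have h2 := VDer.ax (b := b) (Γ := Γ) (VAx.a2 φ (VForm.imp φ φ) φ)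
  have h3 := VDer.ax (b := b) (Γ := Γ) (VAx.a1 φ φ)
  exact VDer.mp h3 (VDer.mp h1 h2)

/-- Deduction theorem. -/
lemma vd_ded {b : VForm} {Γ : Set VForm} {ψ φ : VForm}
    (h : VDer b (Γ ∪ {ψ}) φ) : VDer b Γ (.imp ψ φ) := by
  generalize hΓ' : Γ ∪ {ψ} = Γ' at h
  induction h with
  | ax ha => exact VDer.mp (VDer.ax ha) (VDer.ax (VAx.a1 _ ψ))
  | hyp hm =>
    subst hΓ'
    rcases hm with hm | hm
    · exact VDer.mp (VDer.hyp hm) (VDer.ax (VAx.a1 _ ψ))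
    · rcases hm; exact vd_id b Γ ψ
  | mp _ _ ih1 ih2 =>
    exact VDer.mp (ih1 hΓ') (VDer.mp (ih2 hΓ') (VDer.ax (VAx.a2 ψ _ _)))
  | negThm hp =>
    exact VDer.mp (VDer.negThm hp) (VDer.ax (VAx.a1 _ ψ))

/-- Explosion from vBot. -/
lemma vd_exfalso (b : VForm) (Γ : Set VForm) (φ : VForm) :
    VDer b Γ (.imp (vBot b) φ) := by
  apply vd_ded
  have hb : VDer b (Γ ∪ {vBot b}) (vBot b) := VDer.hyp (Or.inr rfl)
  have h1 : VDer b (Γ ∪ {vBot b}) b := VDer.mp hb (VDer.ax (VAx.a4 _ _))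
  have h2 : VDer b (Γ ∪ {vBot b}) (.conj (.neg b) (.circ b)) :=
    VDer.mp hb (VDer.ax (VAx.a5 _ _))
  have h3 : VDer b (Γ ∪ {vBot b}) (.neg b) := VDer.mp h2 (VDer.ax (VAx.a4 _ _))
  have h4 : VDer b (Γ ∪ {vBot b}) (.circ b) := VDer.mp h2 (VDer.ax (VAx.a5 _ _))
  exact VDer.mp h3 (VDer.mp h1 (VDer.mp h4 (VDer.ax (VAx.a12 b φ))))

/-- In an α-saturated set Δ, ~β ∈ Δ iff β ∉ Δ. -/
theorem vD_saturated_tilde (b : VForm) (Δ : Set VForm) (α : VForm)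
    (h : VSaturated b Δ α) :
    ∀ β : VForm, vNot b β ∈ Δ ↔ β ∉ Δ := by
  intro β
  constructor
  · intro hn hβ
    apply h.1
    have hbot : VDer b Δ (vBot b) := VDer.mp (VDer.hyp hβ) (VDer.hyp hn)
    exact VDer.mp hbot (vd_exfalso b Δ α)
  · intro hβ
    by_contra hn
    apply h.1
    have d1 : VDer b Δ (.imp β α) := vd_ded (h.2 β hβ)
    have d2 : VDer b Δ (.imp (vNot b β) α) := vd_ded (h.2 (vNot b β) hn)
    have d3 : VDer b Δ (.disj (.imp β (vBot b)) β) := VDer.ax (VAx.a8 β (vBot b))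
    have d4 := VDer.ax (b := b) (Γ := Δ) (VAx.a11 β (vBot b) α)
    exact VDer.mp d3 (VDer.mp d1 (VDer.mp d2 d4))
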